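/- For every complex number q with |q| < 1, X(q) = -∑_{n=1}^∞ (q^n/(1-q^n)) · ∑_{k=n+1}^∞ q^k/(1+q^{2k-1}). -/

import Mathlib

/-!
Expanding `1 / (1 - q^(2k-1))` as a geometric series in `q^((2k-1) j)` turns `X(q)` into an
absolutely convergent triple series. Summed first over `k`, each inner series is geometric with
ratio `-q^(2m-1)`, `m = n + j + 1`, which produces the factor `1 / (1 + q^(2m-1))`.
-/

open Complex

noncomputable def Xser (q : ℂ) : ℂ :=
  ∑' k : ℕ, ∑' n : ℕ,
    (-1 : ℂ) ^ (k + 1) * q ^ (2 * (k + 1) * (n + 1) + (k + 1)) /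
      ((1 - q ^ (n + 1)) * (1 - q ^ (2 * k + 1)))

section TripleSum

variable {α β γ E : Type*} [AddCommGroup E] [UniformSpace E] [IsUniformAddGroup E]
  [CompleteSpace E] [T0Space E]

theorem Summable.tsum_tsum_tsum_comm {f : α → β → γ → E}
    (h : Summable fun t : α × β × γ => f t.1 t.2.1 t.2.2) :
    ∑' a, ∑' b, ∑' c, f a b c = ∑' b, ∑' c, ∑' a, f a b c := by
  have hsection : ∀ a, ∑' b, ∑' c, f a b c = ∑' p : β × γ, f a p.1 p.2 := fun a =>
    (h.prod_factor a).tsum_prod.symm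
  rw [tsum_congr hsection, ← Summable.tsum_comm (f := fun a (p : β × γ) => f a p.1 p.2) h]
  exact h.prod_symm.prod.tsum_prod

end TripleSum

lemma summable_pow_add_add {a : ℝ} (ha₀ : 0 ≤ a) (ha : a < 1) :
    Summable fun t : ℕ × ℕ × ℕ => a ^ (t.1 + t.2.1 + t.2.2) := by
  have hgeom := summable_geometric_of_lt_one ha₀ ha
  have hnonneg : ∀ n : ℕ, 0 ≤ a ^ n := fun n => pow_nonneg ha₀ n
  have hpair := hgeom.mul_of_nonneg hgeom hnonneg hnonneg
  refine (hgeom.mul_of_nonneg hpair hnonneg fun p => mul_nonneg (hnonneg _) (hnonneg _)).congr ?_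
  intro t
  simp only [pow_add, mul_assoc]

section NormLtOne

variable {𝕜 : Type*} [NormedDivisionRing 𝕜] {q : 𝕜}

lemma norm_pow_lt_one (hq : ‖q‖ < 1) {m : ℕ} (hm : m ≠ 0) : ‖q ^ m‖ < 1 := by
  rw [norm_pow]
  exact pow_lt_one₀ (norm_nonneg q) hq hm

lemma one_sub_norm_le_norm_one_sub_pow (hq : ‖q‖ < 1) {m : ℕ} (hm : m ≠ 0) :
    1 - ‖q‖ ≤ ‖1 - q ^ m‖ := by
  have hpow : ‖q ^ m‖ ≤ ‖q‖ := by
    rw [norm_pow]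
    exact pow_le_of_le_one (norm_nonneg q) hq.le hm
  have hreverse : ‖(1 : 𝕜)‖ - ‖q ^ m‖ ≤ ‖1 - q ^ m‖ := norm_sub_norm_le _ _
  rw [norm_one] at hreverse
  linarith

end NormLtOne

namespace Xser

noncomputable def term (q : ℂ) (k n j : ℕ) : ℂ :=
  (-1 : ℂ) ^ (k + 1) * q ^ (2 * (k + 1) * (n + 1) + (k + 1) + (2 * k + 1) * j) /
    (1 - q ^ (n + 1))

variable {q : ℂ}

lemma norm_term_le (hq : ‖q‖ < 1) (k n j : ℕ) :
    ‖term q k n j‖ ≤ (1 - ‖q‖)⁻¹ * ‖q‖ ^ (k + n + j) := by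
  have hexp : k + n + j ≤ 2 * (k + 1) * (n + 1) + (k + 1) + (2 * k + 1) * j := by nlinarith
  have hden := one_sub_norm_le_norm_one_sub_pow hq n.succ_ne_zero
  rw [term, norm_div, norm_mul, norm_pow, norm_pow, norm_neg, norm_one, one_pow, one_mul,
    ← div_eq_inv_mul]
  exact div_le_div₀ (by positivity) (pow_le_pow_of_le_one (norm_nonneg q) hq.le hexp)
    (by linarith) hden

lemma summable_term (hq : ‖q‖ < 1) :
    Summable fun t : ℕ × ℕ × ℕ => term q t.1 t.2.1 t.2.2 :=
  .of_norm <| ((summable_pow_add_add (norm_nonneg q) hq).mul_left (1 - ‖q‖)⁻¹).of_nonneg_of_le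
    (fun _ => norm_nonneg _) fun t => norm_term_le hq t.1 t.2.1 t.2.2

lemma tsum_term_right (hq : ‖q‖ < 1) (k n : ℕ) :
    ∑' j, term q k n j = (-1 : ℂ) ^ (k + 1) * q ^ (2 * (k + 1) * (n + 1) + (k + 1)) /
      ((1 - q ^ (n + 1)) * (1 - q ^ (2 * k + 1))) := by
  have hgeom := tsum_geometric_of_norm_lt_one (norm_pow_lt_one hq (by omega : 2 * k + 1 ≠ 0))
  have hterm : ∀ j, term q k n j = (-1 : ℂ) ^ (k + 1) * q ^ (2 * (k + 1) * (n + 1) + (k + 1)) /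
      (1 - q ^ (n + 1)) * (q ^ (2 * k + 1)) ^ j := fun j => by
    rw [term, pow_add q _ ((2 * k + 1) * j), pow_mul]
    ring
  rw [tsum_congr hterm, tsum_mul_left, hgeom]
  simp only [div_eq_mul_inv, mul_inv]
  ring

lemma tsum_term_left (hq : ‖q‖ < 1) (n j : ℕ) :
    ∑' k, term q k n j = -(q ^ (n + 1) / (1 - q ^ (n + 1)) *
      (q ^ (n + 2 + j) / (1 + q ^ (2 * (n + 2 + j) - 1)))) := by
  have hratio : ‖-q ^ (2 * n + 2 * j + 3)‖ < 1 := by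
    rw [norm_neg]
    exact norm_pow_lt_one hq (by omega)
  have hterm : ∀ k, term q k n j = -(q ^ (n + 1) * q ^ (n + 2 + j) / (1 - q ^ (n + 1))) *
      (-q ^ (2 * n + 2 * j + 3)) ^ k := fun k => by
    have hexp : 2 * (k + 1) * (n + 1) + (k + 1) + (2 * k + 1) * j =
        (2 * n + 2 * j + 3) * k + (n + 1) + (n + 2 + j) := by ring
    rw [term, hexp, pow_add q, pow_add q, pow_mul q, neg_pow]
    ring
  have hexp : 2 * (n + 2 + j) - 1 = 2 * n + 2 * j + 3 := by omega
  rw [tsum_congr hterm, tsum_mul_left, tsum_geometric_of_norm_lt_one hratio, sub_neg_eq_add, hexp]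
  ring

end Xser

theorem stmt8 (q : ℂ) (hq : ‖q‖ < 1) :
    Xser q =
      -∑' n : ℕ, (q ^ (n + 1) / (1 - q ^ (n + 1))) *
        ∑' m : ℕ, q ^ (n + 2 + m) / (1 + q ^ (2 * (n + 2 + m) - 1)) := by
  calc Xser q = ∑' k, ∑' n, ∑' j, Xser.term q k n j := by
        simp only [Xser, Xser.tsum_term_right hq]
    _ = ∑' n, ∑' j, ∑' k, Xser.term q k n j := (Xser.summable_term hq).tsum_tsum_tsum_comm
    _ = _ := by simp only [Xser.tsum_term_left hq, tsum_neg, tsum_mul_left]
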